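/- arXiv:1901.03529 — 2 statements merged into one kernel-verified Lean document; each statement's English description precedes it below -/
import Mathlib

section
/- For every u in the Schwartz space 𝒮(ℝⁿ), every x ∈ ℝⁿ and all 0 < s < t, the map s ↦ H_{t,s}u(x) is differentiable at s and its derivative satisfies ∂/∂s H_{t,s}u(x) = +(2π)^{−n/2} ∫_{ℝⁿ} e^{ix·ξ} q(s,ξ) exp(−∫_s^t q(τ,ξ)dτ) û(ξ) dξ, i.e. ∂/∂s H_{t,s} u = −H_{t,s}(−q(s,D)u) where q(s,D) is the pseudo-differential operator with symbol q(s,ξ). -/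
open MeasureTheory Real Filter intervalIntegral

/-- The Fourier transform with normalization `(2π)^(-n/2)`. -/
noncomputable def fourierTransform {n : ℕ} (u : EuclideanSpace ℝ (Fin n) → ℂ)
    (ξ : EuclideanSpace ℝ (Fin n)) : ℂ :=
  (((2 * π) ^ (-(n : ℝ) / 2) : ℝ) : ℂ) *
    ∫ x, Complex.exp (-(Complex.I * ((inner ℝ x ξ : ℝ) : ℂ))) * u x

/-- The operator `H_{t,s}` with symbol `exp(-∫_s^t q(τ,ξ)dτ)`. -/
noncomputable def Hop {n : ℕ} (q : ℝ → EuclideanSpace ℝ (Fin n) → ℝ)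
    (t s : ℝ) (u : EuclideanSpace ℝ (Fin n) → ℂ) (x : EuclideanSpace ℝ (Fin n)) : ℂ :=
  (((2 * π) ^ (-(n : ℝ) / 2) : ℝ) : ℂ) *
    ∫ ξ, Complex.exp (Complex.I * ((inner ℝ x ξ : ℝ) : ℂ)) *
      Complex.exp (-(((∫ τ in s..t, q τ ξ) : ℝ) : ℂ)) * fourierTransform u ξ

/-! For fixed `ξ`, `s ↦ exp (-∫_s^t q(τ, ξ) dτ)` has derivative `q(s, ξ) exp (-∫_s^t q(τ, ξ) dτ)`.
Because `q ≥ 0`, the exponential has modulus at most `1` while `s < t`, so these derivatives are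
dominated, uniformly in `s`, by `C (1 + ‖ξ‖²) |û ξ|`. This is integrable since `û` is again a
Schwartz function, and differentiation under the integral sign gives the formula. -/

theorem hasDerivAt_cexp_neg_intervalIntegral {f : ℝ → ℝ} (hf : Continuous f) (s t : ℝ) :
    HasDerivAt (fun s' => Complex.exp (-((∫ τ in s'..t, f τ : ℝ) : ℂ)))
      (f s * Complex.exp (-((∫ τ in s..t, f τ : ℝ) : ℂ))) s := by
  have h : HasDerivAt (fun s' => ∫ τ in s'..t, f τ) (-f s) s :=
    integral_hasDerivAt_left (hf.intervalIntegrable _ _) (hf.stronglyMeasurableAtFilter _ _)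
      hf.continuousAt
  exact h.ofReal_comp.fun_neg.cexp.congr_deriv (by push_cast; ring)

theorem norm_cexp_neg_intervalIntegral_le_one {f : ℝ → ℝ} (hf : ∀ τ, 0 ≤ f τ) {a b : ℝ}
    (hab : a ≤ b) : ‖Complex.exp (-((∫ τ in a..b, f τ : ℝ) : ℂ))‖ ≤ 1 := by
  rw [Complex.norm_exp, ← Complex.ofReal_neg, Complex.ofReal_re, Real.exp_le_one_iff,
    neg_nonpos]
  exact integral_nonneg hab fun τ _ => hf τ

section ParametricIntegral

variable {α : Type*} [TopologicalSpace α] [MeasurableSpace α] [OpensMeasurableSpace α]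
  {μ : Measure α}

theorem hasDerivAt_integral_cexp_neg_intervalIntegral_mul {Q : ℝ → α → ℝ}
    (hQ : Continuous (Function.uncurry Q)) (hQ_nonneg : ∀ τ ξ, 0 ≤ Q τ ξ) {w : α → ℝ}
    (hQ_le : ∀ τ ξ, Q τ ξ ≤ w ξ) {g : α → ℂ} (hg : Integrable g μ)
    (hwg : Integrable (fun ξ => w ξ * ‖g ξ‖) μ) {s t : ℝ} (hst : s < t) :
    HasDerivAt (fun s' => ∫ ξ, Complex.exp (-((∫ τ in s'..t, Q τ ξ : ℝ) : ℂ)) * g ξ ∂μ)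
      (∫ ξ, Q s ξ * Complex.exp (-((∫ τ in s..t, Q τ ξ : ℝ) : ℂ)) * g ξ ∂μ) s := by
  have hQ_τ : ∀ ξ, Continuous fun τ => Q τ ξ :=
    fun ξ => hQ.comp (continuous_id.prodMk continuous_const)
  have hE_cont : ∀ s', Continuous fun ξ => Complex.exp (-((∫ τ in s'..t, Q τ ξ : ℝ) : ℂ)) :=
    fun s' => by
      have : Continuous fun ξ => ∫ τ in s'..t, Q τ ξ :=
        continuous_parametric_intervalIntegral_of_continuous' (f := fun ξ τ => Q τ ξ)
          (hQ.comp continuous_swap) s' t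
      fun_prop
  have hE_le : ∀ s' < t, ∀ ξ, ‖Complex.exp (-((∫ τ in s'..t, Q τ ξ : ℝ) : ℂ))‖ ≤ 1 :=
    fun s' hs' ξ => norm_cexp_neg_intervalIntegral_le_one (hQ_nonneg · ξ) hs'.le
  have hQ_s : Continuous fun ξ => (Q s ξ : ℂ) :=
    Complex.continuous_ofReal.comp (hQ.comp (continuous_const.prodMk continuous_id))
  refine (hasDerivAt_integral_of_dominated_loc_of_deriv_le (Iio_mem_nhds hst)
    (F' := fun s' ξ => Q s' ξ * Complex.exp (-((∫ τ in s'..t, Q τ ξ : ℝ) : ℂ)) * g ξ)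
    (Eventually.of_forall fun s' => (hE_cont s').aestronglyMeasurable.mul hg.1)
    ?_ ((hQ_s.aestronglyMeasurable.mul (hE_cont s).aestronglyMeasurable).mul hg.1) ?_ hwg ?_).2
  · refine hg.mono ((hE_cont s).aestronglyMeasurable.mul hg.1) (ae_of_all _ fun ξ => ?_)
    rw [Pi.mul_apply, norm_mul]
    exact mul_le_of_le_one_left (norm_nonneg _) (hE_le s hst ξ)
  · refine ae_of_all _ fun ξ s' hs' => ?_
    rw [norm_mul, norm_mul, Complex.norm_real, norm_of_nonneg (hQ_nonneg s' ξ)]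
    gcongr
    exact (mul_le_of_le_one_right (hQ_nonneg s' ξ) (hE_le s' hs' ξ)).trans (hQ_le s' ξ)
  · exact ae_of_all _ fun ξ s' _ =>
      (hasDerivAt_cexp_neg_intervalIntegral (hQ_τ ξ) s' t).mul_const (g ξ)

end ParametricIntegral

section Fourier

variable {n : ℕ}

open FourierTransform in
-- Mathlib's `𝓕` has kernel `e^{-2πi⟪x, ξ⟫}`.
theorem fourierTransform_eq_fourier_smul (u : EuclideanSpace ℝ (Fin n) → ℂ)
    (ξ : EuclideanSpace ℝ (Fin n)) :
    fourierTransform u ξ = (((2 * π) ^ (-(n : ℝ) / 2) : ℝ) : ℂ) * 𝓕 u ((2 * π)⁻¹ • ξ) := by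
  rw [Real.fourier_eq', fourierTransform]
  congr 1
  refine integral_congr_ae (ae_of_all _ fun v => ?_)
  have h2π : 2 * π ≠ 0 := by positivity
  simp only [smul_eq_mul]
  rw [real_inner_smul_right, show -2 * π * ((2 * π)⁻¹ * inner ℝ v ξ) = -inner ℝ v ξ by
    field_simp]
  rw [Complex.ofReal_neg, neg_mul, mul_comm (inner ℝ v ξ : ℂ)]

theorem exists_schwartzMap_eq_fourierTransform (u : SchwartzMap (EuclideanSpace ℝ (Fin n)) ℂ) :
    ∃ G : SchwartzMap (EuclideanSpace ℝ (Fin n)) ℂ, ⇑G = fourierTransform ⇑u := by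
  have h2π : (2 * π)⁻¹ ≠ 0 := by positivity
  let scale :=
    (LinearEquiv.smulOfNeZero ℝ (EuclideanSpace ℝ (Fin n)) _ h2π).toContinuousLinearEquiv
  refine ⟨(((2 * π) ^ (-(n : ℝ) / 2) : ℝ) : ℂ) •
    SchwartzMap.compCLMOfContinuousLinearEquiv ℂ scale (FourierTransform.fourier u), ?_⟩
  ext ξ
  simp [fourierTransform_eq_fourier_smul, scale, SchwartzMap.fourier_coe]

end Fourier

theorem intervalIntegral_comp_max_zero {E : Type*} [NormedAddCommGroup E] [NormedSpace ℝ E]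
    (f : ℝ → E) {a b : ℝ} (ha : 0 ≤ a) (hb : 0 ≤ b) :
    ∫ τ in a..b, f (max τ 0) = ∫ τ in a..b, f τ :=
  integral_congr fun _ hτ => by rw [max_eq_left ((le_inf ha hb).trans hτ.1)]

theorem stmt1_general {n : ℕ}
    (q : ℝ → EuclideanSpace ℝ (Fin n) → ℝ)
    (hq_cont : ContinuousOn (fun p : ℝ × EuclideanSpace ℝ (Fin n) => q p.1 p.2)
      (Set.Ici (0 : ℝ) ×ˢ Set.univ))
    (C : ℝ)
    (hq_bound : ∀ τ, 0 ≤ τ → ∀ ξ, 0 ≤ q τ ξ ∧ q τ ξ ≤ C * (1 + ‖ξ‖ ^ 2))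
    (u : SchwartzMap (EuclideanSpace ℝ (Fin n)) ℂ)
    (x : EuclideanSpace ℝ (Fin n)) (s t : ℝ) (hs : 0 < s) (hst : s < t) :
    HasDerivAt (fun s' => Hop q t s' (⇑u) x)
      ((((2 * π) ^ (-(n : ℝ) / 2) : ℝ) : ℂ) *
        ∫ ξ, Complex.exp (Complex.I * ((inner ℝ x ξ : ℝ) : ℂ)) * ((q s ξ : ℝ) : ℂ) *
          Complex.exp (-(((∫ τ in s..t, q τ ξ) : ℝ) : ℂ)) * fourierTransform (⇑u) ξ) s := by
  obtain ⟨G, hG⟩ := exists_schwartzMap_eq_fourierTransform u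
  -- `q` is only controlled for `τ ≥ 0`; freezing it at `τ = 0` changes nothing on `[s', t]`.
  have hQ_cont : Continuous (Function.uncurry fun τ ξ => q (max τ 0) ξ) :=
    hq_cont.comp_continuous ((continuous_fst.max continuous_const).prodMk continuous_snd)
      fun p => ⟨le_max_right p.1 0, trivial⟩
  have hq_eq : ∀ s' > 0, ∀ ξ, ∫ τ in s'..t, q τ ξ = ∫ τ in s'..t, q (max τ 0) ξ :=
    fun s' hs' ξ => (intervalIntegral_comp_max_zero (q · ξ) hs'.le (hs.trans hst).le).symm
  set g : EuclideanSpace ℝ (Fin n) → ℂ := fun ξ => Complex.exp (Complex.I * (inner ℝ x ξ : ℝ)) * G ξ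
  have hg_norm : ∀ ξ, ‖g ξ‖ = ‖G ξ‖ := fun ξ => by
    rw [norm_mul, Complex.norm_exp_I_mul_ofReal, one_mul]
  have hg : Integrable g :=
    G.integrable.congr' (by fun_prop) (ae_of_all _ fun ξ => (hg_norm ξ).symm)
  have hwg : Integrable fun ξ => C * (1 + ‖ξ‖ ^ 2) * ‖g ξ‖ := by
    simpa only [hg_norm, Pi.add_apply, mul_add, add_mul, one_mul, mul_assoc] using
      (G.integrable.norm.add (G.integrable_pow_mul volume 2)).const_mul C
  have key := (hasDerivAt_integral_cexp_neg_intervalIntegral_mul hQ_cont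
    (fun τ ξ => (hq_bound _ (le_max_right τ 0) ξ).1)
    (fun τ ξ => (hq_bound _ (le_max_right τ 0) ξ).2) hg hwg hst).const_mul
    ((((2 * π) ^ (-(n : ℝ) / 2) : ℝ) : ℂ))
  refine (key.congr_of_eventuallyEq ?_).congr_deriv ?_
  · filter_upwards [lt_mem_nhds hs] with s' hs'
    refine congrArg _ (MeasureTheory.integral_congr_ae (ae_of_all _ fun ξ => ?_))
    simp only [hq_eq s' hs', g, hG]
    ring
  · refine congrArg _ (MeasureTheory.integral_congr_ae (ae_of_all _ fun ξ => ?_))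
    simp only [hq_eq s hs, g, hG, max_eq_left hs.le]
    ring

theorem stmt1 {n : ℕ} (hn : 1 ≤ n)
    (q : ℝ → EuclideanSpace ℝ (Fin n) → ℝ)
    (hq_cont : ContinuousOn (fun p : ℝ × EuclideanSpace ℝ (Fin n) => q p.1 p.2)
      (Set.Ici (0 : ℝ) ×ˢ Set.univ))
    (C : ℝ) (hC : 0 < C)
    (hq_bound : ∀ τ, 0 ≤ τ → ∀ ξ, 0 ≤ q τ ξ ∧ q τ ξ ≤ C * (1 + ‖ξ‖ ^ 2))
    (u : SchwartzMap (EuclideanSpace ℝ (Fin n)) ℂ)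
    (x : EuclideanSpace ℝ (Fin n)) (s t : ℝ) (hs : 0 < s) (hst : s < t) :
    HasDerivAt (fun s' => Hop q t s' (⇑u) x)
      ((((2 * π) ^ (-(n : ℝ) / 2) : ℝ) : ℂ) *
        ∫ ξ, Complex.exp (Complex.I * ((inner ℝ x ξ : ℝ) : ℂ)) * ((q s ξ : ℝ) : ℂ) *
          Complex.exp (-(((∫ τ in s..t, q τ ξ) : ℝ) : ℂ)) * fourierTransform (⇑u) ξ) s :=
  stmt1_general q hq_cont C hq_bound u x s t hs hst
end

section
/- For every u in the Schwartz space 𝒮(ℝⁿ), every t > 0 and every x ∈ ℝⁿ: the map t ↦ σ_t(ξ) is differentiable for each ξ, the map t ↦ S_t u(x) is differentiable, and with A(t,ξ) := −∂/∂t (ln σ_t(ξ)) one has ∂/∂t S_t u(x) = −(2π)^{−n/2} ∫_{ℝⁿ} e^{ix·ξ} A(t,ξ) σ_t(ξ) û(ξ) dξ, i.e. ∂/∂t S_t u + A(t,D) S_t u = 0. -/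
open MeasureTheory Real Filter Topology

/-- `p_t(x) = (2π)^{-n} ∫ e^{ix·ξ} e^{-∫₀ᵗ q(τ,ξ)dτ} dξ`. -/
noncomputable def pDens {n : ℕ} (q : ℝ → EuclideanSpace ℝ (Fin n) → ℝ)
    (t : ℝ) (x : EuclideanSpace ℝ (Fin n)) : ℂ :=
  (((2 * π) ^ (-(n : ℝ)) : ℝ) : ℂ) *
    ∫ ξ, Complex.exp (Complex.I * ((inner ℝ x ξ : ℝ) : ℂ)) *
      ((Real.exp (-(∫ τ in (0:ℝ)..t, q τ ξ)) : ℝ) : ℂ)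

/-- `σ_t(ξ) = p_{1/t}(ξ)/p_{1/t}(0)`. -/
noncomputable def sigmaFn {n : ℕ} (q : ℝ → EuclideanSpace ℝ (Fin n) → ℝ)
    (t : ℝ) (ξ : EuclideanSpace ℝ (Fin n)) : ℂ :=
  pDens q (1 / t) ξ / pDens q (1 / t) 0

/-- `A(t,ξ) = -∂/∂t ln σ_t(ξ)`. -/
noncomputable def Asymb {n : ℕ} (q : ℝ → EuclideanSpace ℝ (Fin n) → ℝ)
    (t : ℝ) (ξ : EuclideanSpace ℝ (Fin n)) : ℂ :=
  -(deriv (fun t' => Complex.log (sigmaFn q t' ξ)) t)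

/-- `S_t u(x) = (2π)^{-n/2} ∫ e^{ix·ξ} σ_t(ξ) û(ξ) dξ`. -/
noncomputable def Sop {n : ℕ} (q : ℝ → EuclideanSpace ℝ (Fin n) → ℝ)
    (t : ℝ) (u : EuclideanSpace ℝ (Fin n) → ℂ) (x : EuclideanSpace ℝ (Fin n)) : ℂ :=
  (((2 * π) ^ (-(n : ℝ) / 2) : ℝ) : ℂ) *
    ∫ ξ, Complex.exp (Complex.I * ((inner ℝ x ξ : ℝ) : ℂ)) * sigmaFn q t ξ *
      fourierTransform u ξ

/-!
`σ_t(ξ)` is a quotient of two values of `p_{1/t}`, the inverse Fourier transform of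
`e^{-Q(1/t, ·)}`. Since `κ₀ ψ ≤ q ≤ κ₁ ψ` and `ψ e^{-cψ} ≤ (2/c) e^{-cψ/2}`, for `s ≥ a > 0` both
`e^{-Q(s, ·)}` and its `s`-derivative `-q(s, ·) e^{-Q(s, ·)}` are dominated by multiples of
`e^{-cψ}` with `c > 0` depending only on `a`. Hence `p_s(y)` can be differentiated in `s` under the
integral sign, and `p_s`, `∂_s p_s` are bounded uniformly in `y` and `s ≥ a`. As `p_{1/t'}(0)` stays
away from `0` for `t'` near `t`, `∂_t σ_{t'}(ξ)` is bounded uniformly in `ξ` and in `t'` near `t`;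
since `û` is integrable, `S_t u(x)` can again be differentiated under the integral sign. Finally
`A(t, ξ) σ_t(ξ) = -∂_t σ_t(ξ)`, the logarithm being differentiable because `σ_t(ξ) > 0`.
-/

open Complex (I)
open scoped Complex

lemma nonneg_of_pos_of_ne {X : Type*} [TopologicalSpace X] {f : X → ℝ} (hf : Continuous f)
    {x₀ : X} [NeBot (𝓝[≠] x₀)] (hpos : ∀ x, x ≠ x₀ → 0 < f x) (x : X) : 0 ≤ f x := by
  rcases eq_or_ne x x₀ with rfl | hx
  · exact ge_of_tendsto (hf.continuousAt.tendsto.mono_left nhdsWithin_le_nhds)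
      (eventually_nhdsWithin_of_forall (s := {x}ᶜ) fun y hy => (hpos y hy).le)
  · exact (hpos x hx).le

lemma mul_exp_neg_mul_le {c : ℝ} (hc : 0 < c) (x : ℝ) :
    x * rexp (-(c * x)) ≤ 2 / c * rexp (-(c / 2 * x)) := by
  have hx : x ≤ 2 / c * rexp (c / 2 * x) := by
    have := Real.add_one_le_exp (c / 2 * x)
    rw [div_mul_eq_mul_div, le_div_iff₀ hc]
    nlinarith
  calc x * rexp (-(c * x)) ≤ 2 / c * rexp (c / 2 * x) * rexp (-(c * x)) := by gcongr
    _ = 2 / c * rexp (-(c / 2 * x)) := by rw [mul_assoc, ← Real.exp_add]; ring_nf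

lemma norm_cexp_I_mul_ofReal_mul (r : ℝ) (z : ℂ) : ‖cexp (I * r) * z‖ = ‖z‖ := by
  rw [norm_mul, Complex.norm_exp_I_mul_ofReal, one_mul]

section CexpInnerIntegral

variable {E : Type*} [NormedAddCommGroup E] [InnerProductSpace ℝ E] [MeasurableSpace E]
  {μ : Measure E} {h : E → ℂ}

lemma norm_integral_cexp_inner_mul_le {g : E → ℝ} (hg : Integrable g μ) (hle : ∀ η, ‖h η‖ ≤ g η)
    (y : E) : ‖∫ η, cexp (I * (inner ℝ y η : ℝ)) * h η ∂μ‖ ≤ ∫ η, g η ∂μ :=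
  norm_integral_le_of_norm_le hg
    (Eventually.of_forall fun η => (norm_cexp_I_mul_ofReal_mul _ _).trans_le (hle η))

variable [OpensMeasurableSpace E]

lemma MeasureTheory.AEStronglyMeasurable.cexp_inner_mul (hh : AEStronglyMeasurable h μ) (y : E) :
    AEStronglyMeasurable (fun η => cexp (I * (inner ℝ y η : ℝ)) * h η) μ :=
  (by fun_prop : Continuous fun η : E => cexp (I * (inner ℝ y η : ℝ))).aestronglyMeasurable.mul hh

lemma MeasureTheory.Integrable.cexp_inner_mul (hh : Integrable h μ) (y : E) :
    Integrable (fun η => cexp (I * (inner ℝ y η : ℝ)) * h η) μ :=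
  hh.norm.mono' (hh.1.cexp_inner_mul y)
    (Eventually.of_forall fun _ => (norm_cexp_I_mul_ofReal_mul _ _).le)

lemma continuous_integral_cexp_inner_mul (hh : Integrable h μ) :
    Continuous fun y => ∫ η, cexp (I * (inner ℝ y η : ℝ)) * h η ∂μ :=
  continuous_of_dominated (fun y => hh.1.cexp_inner_mul y)
    (fun _ => Eventually.of_forall fun _ => (norm_cexp_I_mul_ofReal_mul _ _).le) hh.norm
    (Eventually.of_forall fun _ => by fun_prop)

lemma hasDerivAt_integral_cexp_inner_mul {h h' : ℝ → E → ℂ} {g : E → ℝ} {s₀ : ℝ} {U : Set ℝ}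
    (hU : U ∈ 𝓝 s₀) (hh_meas : ∀ s ∈ U, AEStronglyMeasurable (h s) μ)
    (hh_int : Integrable (h s₀) μ) (hh'_meas : AEStronglyMeasurable (h' s₀) μ)
    (hg : Integrable g μ) (hh'_le : ∀ s ∈ U, ∀ η, ‖h' s η‖ ≤ g η)
    (hh' : ∀ s ∈ U, ∀ η, HasDerivAt (h · η) (h' s η) s) (y : E) :
    HasDerivAt (fun s => ∫ η, cexp (I * (inner ℝ y η : ℝ)) * h s η ∂μ)
      (∫ η, cexp (I * (inner ℝ y η : ℝ)) * h' s₀ η ∂μ) s₀ :=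
  (hasDerivAt_integral_of_dominated_loc_of_deriv_le hU
    (eventually_of_mem hU fun s hs => (hh_meas s hs).cexp_inner_mul y) (hh_int.cexp_inner_mul y)
    (hh'_meas.cexp_inner_mul y)
    (Eventually.of_forall fun η s hs => (norm_cexp_I_mul_ofReal_mul _ _).trans_le (hh'_le s hs η))
    hg (Eventually.of_forall fun η s hs => (hh' s hs η).const_mul _)).2

end CexpInnerIntegral

section Comparable

variable {X : Type*} [TopologicalSpace X] {q : ℝ → X → ℝ} {ψ : X → ℝ} {κ₀ κ₁ : ℝ}

noncomputable def qIntegral (q : ℝ → X → ℝ) (s : ℝ) (x : X) : ℝ := ∫ τ in (0 : ℝ)..s, q τ x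

structure IsUniformlyComparable (q : ℝ → X → ℝ) (ψ : X → ℝ) (κ₀ κ₁ : ℝ) : Prop where
  continuous : Continuous fun p : ℝ × X => q p.1 p.2
  nonneg : ∀ x, 0 ≤ ψ x
  pos : 0 < κ₀
  le_q : ∀ τ, 0 ≤ τ → ∀ x, κ₀ * ψ x ≤ q τ x
  q_le : ∀ τ, 0 ≤ τ → ∀ x, q τ x ≤ κ₁ * ψ x

lemma hasDerivAt_qIntegral (hq : Continuous fun p : ℝ × X => q p.1 p.2) (s : ℝ) (x : X) :
    HasDerivAt (qIntegral q · x) (q s x) s :=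
  have hqx : Continuous (q · x) := hq.comp (continuous_id.prodMk continuous_const)
  intervalIntegral.integral_hasDerivAt_right (hqx.intervalIntegrable _ _)
    (hqx.stronglyMeasurableAtFilter _ _) hqx.continuousAt

lemma continuous_qIntegral (hq : Continuous fun p : ℝ × X => q p.1 p.2) (s : ℝ) :
    Continuous (qIntegral q s) :=
  intervalIntegral.continuous_parametric_intervalIntegral_of_continuous'
    (by exact hq.comp continuous_swap) 0 s

namespace IsUniformlyComparable

lemma mul_le_qIntegral (hq : IsUniformlyComparable q ψ κ₀ κ₁) {a s : ℝ} (ha : 0 ≤ a)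
    (has : a ≤ s) (x : X) : κ₀ * a * ψ x ≤ qIntegral q s x := by
  have hqx : Continuous (q · x) := hq.continuous.comp (continuous_id.prodMk continuous_const)
  have hκ₀ := hq.pos
  have hψ := hq.nonneg x
  calc κ₀ * a * ψ x ≤ κ₀ * s * ψ x := by gcongr
    _ = ∫ _ in (0 : ℝ)..s, κ₀ * ψ x := by
        rw [intervalIntegral.integral_const, sub_zero, smul_eq_mul]; ring
    _ ≤ qIntegral q s x :=
      intervalIntegral.integral_mono_on (ha.trans has) intervalIntegrable_const
        (hqx.intervalIntegrable _ _) fun τ hτ => hq.le_q τ hτ.1 x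

lemma exp_neg_qIntegral_le (hq : IsUniformlyComparable q ψ κ₀ κ₁) {a s : ℝ} (ha : 0 ≤ a)
    (has : a ≤ s) (x : X) : rexp (-qIntegral q s x) ≤ rexp (-(κ₀ * a * ψ x)) :=
  Real.exp_le_exp.2 (neg_le_neg (hq.mul_le_qIntegral ha has x))

lemma norm_exp_neg_qIntegral_mul_le (hq : IsUniformlyComparable q ψ κ₀ κ₁) {a s : ℝ}
    (ha : 0 < a) (has : a ≤ s) (x : X) :
    ‖rexp (-qIntegral q s x) * -q s x‖ ≤ |κ₁| * (2 / (κ₀ * a)) * rexp (-(κ₀ * a / 2 * ψ x)) := by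
  have hκ₀ := hq.pos
  have hψ := hq.nonneg x
  have hq0 : 0 ≤ q s x := (mul_nonneg hκ₀.le hψ).trans (hq.le_q s (ha.le.trans has) x)
  rw [norm_mul, norm_neg, Real.norm_of_nonneg (Real.exp_pos _).le, Real.norm_of_nonneg hq0]
  calc rexp (-qIntegral q s x) * q s x ≤ rexp (-(κ₀ * a * ψ x)) * (|κ₁| * ψ x) := by
        refine mul_le_mul (hq.exp_neg_qIntegral_le ha.le has x) ?_ hq0 (Real.exp_pos _).le
        exact (hq.q_le s (ha.le.trans has) x).trans (by gcongr; exact le_abs_self _)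
    _ = |κ₁| * (ψ x * rexp (-(κ₀ * a * ψ x))) := by ring
    _ ≤ |κ₁| * (2 / (κ₀ * a) * rexp (-(κ₀ * a / 2 * ψ x))) := by
        gcongr ?_ * ?_; exact mul_exp_neg_mul_le (by positivity) _
    _ = _ := by ring

end IsUniformlyComparable

end Comparable

section Density

variable {n : ℕ} {q : ℝ → EuclideanSpace ℝ (Fin n) → ℝ} {ψ : EuclideanSpace ℝ (Fin n) → ℝ}
  {κ₀ κ₁ : ℝ}

noncomputable def pDensDeriv (q : ℝ → EuclideanSpace ℝ (Fin n) → ℝ) (s : ℝ)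
    (y : EuclideanSpace ℝ (Fin n)) : ℂ :=
  (((2 * π) ^ (-(n : ℝ)) : ℝ) : ℂ) *
    ∫ η, cexp (I * (inner ℝ y η : ℝ)) * ((rexp (-qIntegral q s η) * -q s η : ℝ) : ℂ)

namespace IsUniformlyComparable

lemma integrable_exp_neg_qIntegral (hq : IsUniformlyComparable q ψ κ₀ κ₁)
    (hψ_int : ∀ c : ℝ, 0 < c → Integrable fun ξ => rexp (-(c * ψ ξ))) {s : ℝ} (hs : 0 < s) :
    Integrable fun η => rexp (-qIntegral q s η) :=
  (hψ_int (κ₀ * s) (mul_pos hq.pos hs)).mono'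
    (continuous_qIntegral hq.continuous s).neg.rexp.aestronglyMeasurable
    (Eventually.of_forall fun η => by
      rw [Real.norm_of_nonneg (Real.exp_pos _).le]
      exact hq.exp_neg_qIntegral_le hs.le le_rfl η)

lemma integrable_exp_neg_qIntegral_mul (hq : IsUniformlyComparable q ψ κ₀ κ₁)
    (hψ_int : ∀ c : ℝ, 0 < c → Integrable fun ξ => rexp (-(c * ψ ξ))) {s : ℝ} (hs : 0 < s) :
    Integrable fun η => rexp (-qIntegral q s η) * -q s η :=
  ((hψ_int (κ₀ * s / 2) (by have := hq.pos; positivity)).const_mul _).mono'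
    ((continuous_qIntegral hq.continuous s).neg.rexp.mul
      (hq.continuous.comp (continuous_const.prodMk continuous_id)).neg).aestronglyMeasurable
    (Eventually.of_forall (hq.norm_exp_neg_qIntegral_mul_le hs le_rfl))

lemma hasDerivAt_pDens (hq : IsUniformlyComparable q ψ κ₀ κ₁)
    (hψ_int : ∀ c : ℝ, 0 < c → Integrable fun ξ => rexp (-(c * ψ ξ))) {s₀ : ℝ} (hs₀ : 0 < s₀)
    (y : EuclideanSpace ℝ (Fin n)) :
    HasDerivAt (pDens q · y) (pDensDeriv q s₀ y) s₀ := by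
  have hs₀' : 0 < s₀ / 2 := by positivity
  refine HasDerivAt.const_mul _ (hasDerivAt_integral_cexp_inner_mul
    (h' := fun s η => ((rexp (-qIntegral q s η) * -q s η : ℝ) : ℂ))
    (Ioi_mem_nhds (half_lt_self hs₀))
    (fun s hs => (hq.integrable_exp_neg_qIntegral hψ_int (hs₀'.trans hs)).ofReal.1)
    (hq.integrable_exp_neg_qIntegral hψ_int hs₀).ofReal
    (hq.integrable_exp_neg_qIntegral_mul hψ_int hs₀).ofReal.1
    ((hψ_int (κ₀ * (s₀ / 2) / 2) (by have := hq.pos; positivity)).const_mul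
      (|κ₁| * (2 / (κ₀ * (s₀ / 2)))))
    (fun s hs η => ?_) (fun s _ η => ?_) y)
  · rw [Complex.norm_real]
    exact hq.norm_exp_neg_qIntegral_mul_le hs₀' hs.le η
  · exact ((hasDerivAt_qIntegral hq.continuous s η).neg.exp).ofReal_comp

lemma continuous_pDens (hq : IsUniformlyComparable q ψ κ₀ κ₁)
    (hψ_int : ∀ c : ℝ, 0 < c → Integrable fun ξ => rexp (-(c * ψ ξ))) {s : ℝ} (hs : 0 < s) :
    Continuous (pDens q s) :=
  continuous_const.mul
    (continuous_integral_cexp_inner_mul (hq.integrable_exp_neg_qIntegral hψ_int hs).ofReal)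

lemma continuous_pDensDeriv (hq : IsUniformlyComparable q ψ κ₀ κ₁)
    (hψ_int : ∀ c : ℝ, 0 < c → Integrable fun ξ => rexp (-(c * ψ ξ))) {s : ℝ} (hs : 0 < s) :
    Continuous (pDensDeriv q s) :=
  continuous_const.mul
    (continuous_integral_cexp_inner_mul (hq.integrable_exp_neg_qIntegral_mul hψ_int hs).ofReal)

lemma exists_norm_pDens_le (hq : IsUniformlyComparable q ψ κ₀ κ₁)
    (hψ_int : ∀ c : ℝ, 0 < c → Integrable fun ξ => rexp (-(c * ψ ξ))) {a : ℝ} (ha : 0 < a) :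
    ∃ P, ∀ s, a ≤ s → ∀ y, ‖pDens q s y‖ ≤ P :=
  ⟨‖(((2 * π) ^ (-(n : ℝ)) : ℝ) : ℂ)‖ * ∫ η, rexp (-(κ₀ * a * ψ η)), fun s has y => by
    rw [pDens, norm_mul]
    refine mul_le_mul_of_nonneg_left ?_ (norm_nonneg _)
    refine norm_integral_cexp_inner_mul_le (hψ_int (κ₀ * a) (mul_pos hq.pos ha)) (fun η => ?_) y
    rw [Complex.norm_real, Real.norm_of_nonneg (Real.exp_pos _).le]
    exact hq.exp_neg_qIntegral_le ha.le has η⟩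

lemma exists_norm_pDensDeriv_le (hq : IsUniformlyComparable q ψ κ₀ κ₁)
    (hψ_int : ∀ c : ℝ, 0 < c → Integrable fun ξ => rexp (-(c * ψ ξ))) {a : ℝ} (ha : 0 < a) :
    ∃ D, ∀ s, a ≤ s → ∀ y, ‖pDensDeriv q s y‖ ≤ D :=
  ⟨‖(((2 * π) ^ (-(n : ℝ)) : ℝ) : ℂ)‖ *
      ∫ η, |κ₁| * (2 / (κ₀ * a)) * rexp (-(κ₀ * a / 2 * ψ η)), fun s has y => by
    rw [pDensDeriv, norm_mul]
    refine mul_le_mul_of_nonneg_left ?_ (norm_nonneg _)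
    refine norm_integral_cexp_inner_mul_le
      ((hψ_int _ (by have := hq.pos; positivity)).const_mul _) (fun η => ?_) y
    rw [Complex.norm_real]
    exact hq.norm_exp_neg_qIntegral_mul_le ha has η⟩

end IsUniformlyComparable

end Density

section Fourier

variable {n : ℕ}

lemma fourierTransform_eq_fourier (u : SchwartzMap (EuclideanSpace ℝ (Fin n)) ℂ) :
    fourierTransform ⇑u = fun ξ =>
      (((2 * π) ^ (-(n : ℝ) / 2) : ℝ) : ℂ) *
        SchwartzMap.fourierTransformCLM ℂ u ((2 * π)⁻¹ • ξ) := by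
  funext ξ
  rw [fourierTransform, SchwartzMap.fourierTransformCLM_apply, SchwartzMap.fourier_coe,
    Real.fourier_eq']
  congr 2 with v
  rw [real_inner_smul_right, smul_eq_mul]
  congr 2
  push_cast
  field_simp

lemma integrable_fourierTransform (u : SchwartzMap (EuclideanSpace ℝ (Fin n)) ℂ) :
    Integrable (fourierTransform ⇑u) := by
  rw [fourierTransform_eq_fourier]
  exact ((SchwartzMap.fourierTransformCLM ℂ u).integrable.comp_smul (by positivity)).const_mul _

lemma continuous_fourierTransform (u : SchwartzMap (EuclideanSpace ℝ (Fin n)) ℂ) :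
    Continuous (fourierTransform ⇑u) := by
  rw [fourierTransform_eq_fourier]
  exact continuous_const.mul
    ((SchwartzMap.fourierTransformCLM ℂ u).continuous.comp (continuous_const_smul _))

end Fourier

section Symbol

variable {n : ℕ} {q : ℝ → EuclideanSpace ℝ (Fin n) → ℝ} {ψ : EuclideanSpace ℝ (Fin n) → ℝ}
  {κ₀ κ₁ : ℝ} {t : ℝ}

noncomputable def sigmaDeriv (q : ℝ → EuclideanSpace ℝ (Fin n) → ℝ) (t : ℝ)
    (ξ : EuclideanSpace ℝ (Fin n)) : ℂ :=
  ((-(t ^ 2)⁻¹ : ℝ) : ℂ) *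
    ((pDensDeriv q (1 / t) ξ * pDens q (1 / t) 0 - pDens q (1 / t) ξ * pDensDeriv q (1 / t) 0) /
      pDens q (1 / t) 0 ^ 2)

lemma norm_sigmaDeriv_le {P D m : ℝ} (hm : 0 < m) (hP : ∀ y, ‖pDens q (1 / t) y‖ ≤ P)
    (hD : ∀ y, ‖pDensDeriv q (1 / t) y‖ ≤ D) (h0 : m ≤ ‖pDens q (1 / t) 0‖)
    (ξ : EuclideanSpace ℝ (Fin n)) :
    ‖sigmaDeriv q t ξ‖ ≤ (t ^ 2)⁻¹ * ((D * P + P * D) / m ^ 2) := by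
  have hP0 : 0 ≤ P := (norm_nonneg _).trans (hP 0)
  have hD0 : 0 ≤ D := (norm_nonneg _).trans (hD 0)
  rw [sigmaDeriv, norm_mul, Complex.norm_real, norm_neg, norm_inv, norm_pow, Real.norm_eq_abs,
    sq_abs, norm_div, norm_pow]
  gcongr
  refine (norm_sub_le _ _).trans ?_
  rw [norm_mul, norm_mul]
  exact add_le_add (mul_le_mul (hD ξ) (hP 0) (norm_nonneg _) hD0)
    (mul_le_mul (hP ξ) (hD 0) (norm_nonneg _) hP0)

namespace IsUniformlyComparable

lemma hasDerivAt_pDens_one_div (hq : IsUniformlyComparable q ψ κ₀ κ₁)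
    (hψ_int : ∀ c : ℝ, 0 < c → Integrable fun ξ => rexp (-(c * ψ ξ))) (ht : 0 < t)
    (y : EuclideanSpace ℝ (Fin n)) :
    HasDerivAt (fun t' => pDens q (1 / t') y)
      (((-(t ^ 2)⁻¹ : ℝ) : ℂ) * pDensDeriv q (1 / t) y) t := by
  simpa only [one_div, Complex.real_smul, Function.comp_def] using
    (hq.hasDerivAt_pDens hψ_int (inv_pos.2 ht) y).scomp t (hasDerivAt_inv ht.ne')

lemma hasDerivAt_sigmaFn (hq : IsUniformlyComparable q ψ κ₀ κ₁)
    (hψ_int : ∀ c : ℝ, 0 < c → Integrable fun ξ => rexp (-(c * ψ ξ))) (ht : 0 < t)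
    (h0 : pDens q (1 / t) 0 ≠ 0) (ξ : EuclideanSpace ℝ (Fin n)) :
    HasDerivAt (sigmaFn q · ξ) (sigmaDeriv q t ξ) t :=
  ((hq.hasDerivAt_pDens_one_div hψ_int ht ξ).div (hq.hasDerivAt_pDens_one_div hψ_int ht 0)
    h0).congr_deriv (by rw [sigmaDeriv]; ring)

lemma continuous_sigmaFn (hq : IsUniformlyComparable q ψ κ₀ κ₁)
    (hψ_int : ∀ c : ℝ, 0 < c → Integrable fun ξ => rexp (-(c * ψ ξ))) (ht : 0 < t) :
    Continuous (sigmaFn q t) :=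
  (hq.continuous_pDens hψ_int (one_div_pos.2 ht)).div_const _

lemma continuous_sigmaDeriv (hq : IsUniformlyComparable q ψ κ₀ κ₁)
    (hψ_int : ∀ c : ℝ, 0 < c → Integrable fun ξ => rexp (-(c * ψ ξ))) (ht : 0 < t) :
    Continuous (sigmaDeriv q t) := by
  have := hq.continuous_pDens hψ_int (one_div_pos.2 ht)
  have := hq.continuous_pDensDeriv hψ_int (one_div_pos.2 ht)
  unfold sigmaDeriv
  fun_prop

lemma exists_norm_sigmaFn_le (hq : IsUniformlyComparable q ψ κ₀ κ₁)
    (hψ_int : ∀ c : ℝ, 0 < c → Integrable fun ξ => rexp (-(c * ψ ξ))) (ht : 0 < t) :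
    ∃ K, ∀ ξ, ‖sigmaFn q t ξ‖ ≤ K := by
  obtain ⟨P, hP⟩ := hq.exists_norm_pDens_le hψ_int (one_div_pos.2 ht)
  exact ⟨P / ‖pDens q (1 / t) 0‖, fun ξ => by
    rw [sigmaFn, norm_div]; gcongr; exact hP _ le_rfl ξ⟩

lemma eventually_norm_sigmaDeriv_le (hq : IsUniformlyComparable q ψ κ₀ κ₁)
    (hψ_int : ∀ c : ℝ, 0 < c → Integrable fun ξ => rexp (-(c * ψ ξ))) (ht : 0 < t)
    (h0 : pDens q (1 / t) 0 ≠ 0) :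
    ∃ M, ∀ᶠ t' in 𝓝 t, ∀ ξ, ‖sigmaDeriv q t' ξ‖ ≤ M := by
  obtain ⟨P, hP⟩ := hq.exists_norm_pDens_le hψ_int (one_div_pos.2 (mul_pos two_pos ht))
  obtain ⟨D, hD⟩ := hq.exists_norm_pDensDeriv_le hψ_int (one_div_pos.2 (mul_pos two_pos ht))
  set m := ‖pDens q (1 / t) 0‖
  have hm : 0 < m := norm_pos_iff.2 h0
  have h_inv : ∀ᶠ t' in 𝓝 t, 1 / (2 * t) < 1 / t' :=
    continuousAt_const.eventually_lt (continuousAt_const.div continuousAt_id ht.ne')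
      (one_div_lt_one_div_of_lt ht (by linarith))
  have h_sq : ∀ᶠ t' in 𝓝 t, (t' ^ 2)⁻¹ < 2 * (t ^ 2)⁻¹ :=
    ((continuousAt_id.pow 2).inv₀ (pow_pos ht 2).ne').eventually_lt continuousAt_const
      (show (t ^ 2)⁻¹ < 2 * (t ^ 2)⁻¹ by linarith [inv_pos.2 (pow_pos ht 2)])
  have h_den : ∀ᶠ t' in 𝓝 t, m / 2 < ‖pDens q (1 / t') 0‖ :=
    continuousAt_const.eventually_lt (hq.hasDerivAt_pDens_one_div hψ_int ht 0).continuousAt.norm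
      (half_lt_self hm)
  refine ⟨2 * (t ^ 2)⁻¹ * ((D * P + P * D) / (m / 2) ^ 2), ?_⟩
  filter_upwards [h_inv, h_sq, h_den] with t' h_inv h_sq h_den ξ
  have hDP : 0 ≤ (D * P + P * D) / (m / 2) ^ 2 := by
    have := (norm_nonneg _).trans (hP _ le_rfl 0)
    have := (norm_nonneg _).trans (hD _ le_rfl 0)
    positivity
  calc ‖sigmaDeriv q t' ξ‖ ≤ (t' ^ 2)⁻¹ * ((D * P + P * D) / (m / 2) ^ 2) :=
        norm_sigmaDeriv_le (half_pos hm) (hP _ h_inv.le) (hD _ h_inv.le) h_den.le ξ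
    _ ≤ _ := by gcongr

end IsUniformlyComparable

lemma re_sigmaFn_pos (hp : ∀ y, 0 < (pDens q (1 / t) y).re ∧ (pDens q (1 / t) y).im = 0)
    (ξ : EuclideanSpace ℝ (Fin n)) : 0 < (sigmaFn q t ξ).re := by
  have hξ := hp ξ
  have h0 := hp 0
  rw [sigmaFn, Complex.div_re, hξ.2, h0.2, zero_mul, zero_div, add_zero]
  exact div_pos (mul_pos hξ.1 h0.1)
    (Complex.normSq_pos.2 fun h => h0.1.ne' (by rw [h, Complex.zero_re]))

lemma Asymb_mul_sigmaFn {ξ : EuclideanSpace ℝ (Fin n)} {σ' : ℂ}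
    (hσ : HasDerivAt (sigmaFn q · ξ) σ' t) (hre : 0 < (sigmaFn q t ξ).re) :
    Asymb q t ξ * sigmaFn q t ξ = -σ' := by
  have hne : sigmaFn q t ξ ≠ 0 := fun h => by simp [h] at hre
  rw [Asymb, (hσ.clog_real (Complex.mem_slitPlane_iff.2 (Or.inl hre))).deriv, neg_mul,
    div_mul_cancel₀ _ hne]

lemma IsUniformlyComparable.hasDerivAt_Sop (hq : IsUniformlyComparable q ψ κ₀ κ₁)
    (hψ_int : ∀ c : ℝ, 0 < c → Integrable fun ξ => rexp (-(c * ψ ξ)))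
    (hp : ∀ s, 0 < s → pDens q s 0 ≠ 0) (u : SchwartzMap (EuclideanSpace ℝ (Fin n)) ℂ)
    (ht : 0 < t) (x : EuclideanSpace ℝ (Fin n)) :
    HasDerivAt (fun t' => Sop q t' u x)
      ((((2 * π) ^ (-(n : ℝ) / 2) : ℝ) : ℂ) *
        ∫ ξ, cexp (I * (inner ℝ x ξ : ℝ)) * sigmaDeriv q t ξ * fourierTransform u ξ) t := by
  obtain ⟨M, hM⟩ := hq.eventually_norm_sigmaDeriv_le hψ_int ht (hp _ (one_div_pos.2 ht))
  obtain ⟨K, hK⟩ := hq.exists_norm_sigmaFn_le hψ_int ht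
  have hû := integrable_fourierTransform u
  have hû_meas := (continuous_fourierTransform u).aestronglyMeasurable (μ := volume)
  simp only [Sop, mul_assoc]
  refine HasDerivAt.const_mul _ (hasDerivAt_integral_cexp_inner_mul
    (h' := fun t' ξ => sigmaDeriv q t' ξ * fourierTransform u ξ)
    (Filter.Eventually.and (Ioi_mem_nhds ht) hM) (fun t' ht' => ?_) ?_ ?_ (hû.norm.const_mul M)
    (fun t' ht' ξ => ?_) (fun t' ht' ξ => ?_) x)
  · exact (hq.continuous_sigmaFn hψ_int ht'.1).aestronglyMeasurable.mul hû_meas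
  · exact hû.bdd_mul (hq.continuous_sigmaFn hψ_int ht).aestronglyMeasurable
      (Eventually.of_forall hK)
  · exact (hq.continuous_sigmaDeriv hψ_int ht).aestronglyMeasurable.mul hû_meas
  · rw [norm_mul]
    exact mul_le_mul_of_nonneg_right (ht'.2 ξ) (norm_nonneg _)
  · exact (hq.hasDerivAt_sigmaFn hψ_int ht'.1 (hp _ (one_div_pos.2 ht'.1)) ξ).mul_const _

end Symbol

theorem stmt7_general {n : ℕ} (hn : 1 ≤ n)
    (ψ : EuclideanSpace ℝ (Fin n) → ℝ) (hψ_cont : Continuous ψ)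
    (hψ_pos : ∀ ξ, ξ ≠ 0 → 0 < ψ ξ)
    (hψ_int : ∀ c : ℝ, 0 < c → Integrable (fun ξ => Real.exp (-(c * ψ ξ))))
    (q : ℝ → EuclideanSpace ℝ (Fin n) → ℝ)
    (hq_cont : Continuous (fun p : ℝ × EuclideanSpace ℝ (Fin n) => q p.1 p.2))
    (κ₀ κ₁ : ℝ) (hκ₀ : 0 < κ₀)
    (hq_bound : ∀ τ, 0 ≤ τ → ∀ ξ, κ₀ * ψ ξ ≤ q τ ξ ∧ q τ ξ ≤ κ₁ * ψ ξ)
    (hp_pos : ∀ t : ℝ, 0 < t → ∀ ξ, 0 < (pDens q t ξ).re ∧ (pDens q t ξ).im = 0)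
    (u : SchwartzMap (EuclideanSpace ℝ (Fin n)) ℂ)
    (t : ℝ) (ht : 0 < t) (x : EuclideanSpace ℝ (Fin n)) :
    (∀ ξ, DifferentiableAt ℝ (fun t' => sigmaFn q t' ξ) t) ∧
    DifferentiableAt ℝ (fun t' => Sop q t' (⇑u) x) t ∧
    HasDerivAt (fun t' => Sop q t' (⇑u) x)
      (-((((2 * π) ^ (-(n : ℝ) / 2) : ℝ) : ℂ) *
        ∫ ξ, Complex.exp (Complex.I * ((inner ℝ x ξ : ℝ) : ℂ)) * Asymb q t ξ *
          sigmaFn q t ξ * fourierTransform (⇑u) ξ)) t := by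
  have : NeZero n := ⟨by omega⟩
  have hq : IsUniformlyComparable q ψ κ₀ κ₁ :=
    ⟨hq_cont, nonneg_of_pos_of_ne hψ_cont hψ_pos, hκ₀, fun τ hτ ξ => (hq_bound τ hτ ξ).1,
      fun τ hτ ξ => (hq_bound τ hτ ξ).2⟩
  have hp : ∀ s, 0 < s → pDens q s 0 ≠ 0 := fun s hs h =>
    (hp_pos s hs 0).1.ne' (by rw [h, Complex.zero_re])
  have hσ := hq.hasDerivAt_sigmaFn hψ_int ht (hp _ (one_div_pos.2 ht))
  have hS := hq.hasDerivAt_Sop hψ_int hp u ht x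
  refine ⟨fun ξ => (hσ ξ).differentiableAt, hS.differentiableAt, ?_⟩
  convert hS using 1
  rw [← mul_neg, ← integral_neg]
  congr 2 with ξ
  rw [mul_assoc _ (Asymb q t ξ),
    Asymb_mul_sigmaFn (hσ ξ) (re_sigmaFn_pos (hp_pos _ (one_div_pos.2 ht)) ξ)]
  ring

theorem stmt7 {n : ℕ} (hn : 1 ≤ n)
    (ψ : EuclideanSpace ℝ (Fin n) → ℝ) (hψ_cont : Continuous ψ)
    (hψ_pos : ∀ ξ, ξ ≠ 0 → 0 < ψ ξ)
    (C : ℝ) (hC : 0 < C) (hψ_growth : ∀ ξ, ψ ξ ≤ C * (1 + ‖ξ‖ ^ 2))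
    (hψ_int : ∀ c : ℝ, 0 < c → Integrable (fun ξ => Real.exp (-(c * ψ ξ))))
    (q : ℝ → EuclideanSpace ℝ (Fin n) → ℝ)
    (hq_cont : Continuous (fun p : ℝ × EuclideanSpace ℝ (Fin n) => q p.1 p.2))
    (κ₀ κ₁ : ℝ) (hκ₀ : 0 < κ₀) (hκ : κ₀ ≤ κ₁)
    (hq_bound : ∀ τ, 0 ≤ τ → ∀ ξ, κ₀ * ψ ξ ≤ q τ ξ ∧ q τ ξ ≤ κ₁ * ψ ξ)
    (hp_pos : ∀ t : ℝ, 0 < t → ∀ ξ, 0 < (pDens q t ξ).re ∧ (pDens q t ξ).im = 0)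
    (u : SchwartzMap (EuclideanSpace ℝ (Fin n)) ℂ)
    (t : ℝ) (ht : 0 < t) (x : EuclideanSpace ℝ (Fin n)) :
    (∀ ξ, DifferentiableAt ℝ (fun t' => sigmaFn q t' ξ) t) ∧
    DifferentiableAt ℝ (fun t' => Sop q t' (⇑u) x) t ∧
    HasDerivAt (fun t' => Sop q t' (⇑u) x)
      (-((((2 * π) ^ (-(n : ℝ) / 2) : ℝ) : ℂ) *
        ∫ ξ, Complex.exp (Complex.I * ((inner ℝ x ξ : ℝ) : ℂ)) * Asymb q t ξ *
          sigmaFn q t ξ * fourierTransform (⇑u) ξ)) t :=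
  stmt7_general hn ψ hψ_cont hψ_pos hψ_int q hq_cont κ₀ κ₁ hκ₀ hq_bound hp_pos u t ht x
end
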